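/- Define the weight of (a,b,c,d) ∈ ℤ₄⁴ in D(1,2) as in the previous context. Then every nonzero element of the subgroup C' of ℤ₄⁴ generated by (0,1,2,3), (1,0,1,2), and (0,0,1,1) has D(1,2)-weight at least 2. -/

import Mathlib

/-! Every element of the closure is a `ZMod 4`-combination of the three generators, so the
claim is a finite check over the 64 coefficient triples. -/

/-- The Shrikhande weight on `ZMod 4 × ZMod 4`. -/
def shW (p : ZMod 4 × ZMod 4) : ℕ :=
  if p = 0 then 0
  else if p ∈ ({(0,1),(0,3),(1,0),(3,0),(1,1),(3,3)} : Finset (ZMod 4 × ZMod 4)) then 1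
  else 2

/-- The weight of a vector of `ℤ₄⁴` viewed as a vertex of the Doob graph `D(1,2)`. -/
def doobW12 (v : Fin 4 → ZMod 4) : ℕ :=
  shW (v 0, v 1) + (if v 2 ≠ 0 then 1 else 0) + (if v 3 ≠ 0 then 1 else 0)

theorem AddSubgroup.closure_le_span_toAddSubgroup {R M : Type*} [Ring R] [AddCommGroup M]
    [Module R M] (s : Set M) :
    AddSubgroup.closure s ≤ (Submodule.span R s).toAddSubgroup :=
  (AddSubgroup.closure_le _).2 Submodule.subset_span

theorem two_le_doobW12_of_combination_ne_zero (a b c : ZMod 4)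
    (h : a • ![0,1,2,3] + b • ![1,0,1,2] + c • ![0,0,1,1] ≠ (0 : Fin 4 → ZMod 4)) :
    2 ≤ doobW12 (a • ![0,1,2,3] + b • ![1,0,1,2] + c • ![0,0,1,1]) := by
  revert a b c
  decide

theorem stmt_10 :
    ∀ v ∈ AddSubgroup.closure
      ({![0,1,2,3], ![1,0,1,2], ![0,0,1,1]} : Set (Fin 4 → ZMod 4)),
      v ≠ 0 → 2 ≤ doobW12 v := by
  intro v hv hv0
  obtain ⟨a, b, c, rfl⟩ :=
    Submodule.mem_span_triple.1 (AddSubgroup.closure_le_span_toAddSubgroup (R := ZMod 4) _ hv)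
  exact two_le_doobW12_of_combination_ne_zero a b c hv0
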